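/- For every integer N ≥ 2, every ω ∈ ℝ, and every λ ∈ ℂ, the characteristic determinant satisfies det(H^{(N)}(ω) − λ·I) = P_{N, 1+iω}(−λ/2). In particular, λ is an eigenvalue of H^{(N)}(ω) if and only if −λ/2 is a root of the secular polynomial P_{N,1+iω}. -/

import Mathlib

/-!
Expanding along the last row, the determinant `Dₙ` of the `n × n` tridiagonal matrix with
diagonal `d₀, d₁, …` and off-diagonal entries `-1` satisfies `Dₙ₊₂ = dₙ₊₁ Dₙ₊₁ - Dₙ`, which for
constant diagonal `2y` is the recursion of the Chebyshev polynomials `Uₙ(y)`. With `y = -λ/2`,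
`H^{(N)}(ω) - λ` is of this form except for its two corner entries, which are shifted by `-z` and
`-conj z` for `z = 1 + iω`; carrying these shifts through the recursion gives
`U_N - (z + conj z) U_{N-1} + z conj z U_{N-2} = P_{N,z}(y)`.
-/

open Matrix

/-- The N×N non-Hermitian discrete square-well Hamiltonian `H^{(N)}(ω)`. -/
noncomputable def Hmat (N : ℕ) (ω : ℝ) : Matrix (Fin N) (Fin N) ℂ :=
  Matrix.of fun j k =>
    if (j : ℕ) = (k : ℕ) then
      (if (j : ℕ) = 0 then -1 - Complex.I * ω
       else if (j : ℕ) = N - 1 then -1 + Complex.I * ω else 0)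
    else if (j : ℕ) + 1 = (k : ℕ) ∨ (k : ℕ) + 1 = (j : ℕ) then -1 else 0

/-- Chebyshev polynomials of the second kind (as functions on ℂ). -/
noncomputable def chebU : ℕ → ℂ → ℂ
  | 0, _ => 1
  | 1, y => 2 * y
  | n + 2, y => 2 * y * chebU (n + 1) y - chebU n y

/-- The secular polynomial `P_{N,z}(y) = z·conj z·U_{N−2}(y) − (z+conj z)·U_{N−1}(y) + U_N(y)`. -/
noncomputable def Psec (N : ℕ) (z y : ℂ) : ℂ :=
  z * starRingEnd ℂ z * chebU (N - 2) y
    - (z + starRingEnd ℂ z) * chebU (N - 1) y + chebU N y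

section Tridiagonal

variable {R : Type*} [CommRing R]

def tridiag (d : ℕ → R) (n : ℕ) : Matrix (Fin n) (Fin n) R :=
  Matrix.of fun i j =>
    if (i : ℕ) = j then d i else if (i : ℕ) + 1 = j ∨ (j : ℕ) + 1 = i then -1 else 0

lemma tridiag_apply_self (d : ℕ → R) {n : ℕ} (i : Fin n) : tridiag d n i i = d i := by
  simp [tridiag]

lemma tridiag_apply_of_adj (d : ℕ → R) {n : ℕ} {i j : Fin n}
    (h : (i : ℕ) + 1 = j ∨ (j : ℕ) + 1 = i) : tridiag d n i j = -1 := by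
  simp only [tridiag, of_apply]
  split_ifs <;> first | rfl | omega

lemma tridiag_apply_of_far (d : ℕ → R) {n : ℕ} {i j : Fin n}
    (h : (i : ℕ) + 1 < j ∨ (j : ℕ) + 1 < i) : tridiag d n i j = 0 := by
  simp only [tridiag, of_apply]
  split_ifs <;> first | rfl | omega

lemma tridiag_submatrix_castSucc (d : ℕ → R) (n : ℕ) :
    (tridiag d (n + 1)).submatrix Fin.castSucc Fin.castSucc = tridiag d n := by
  ext i j
  simp [tridiag]

lemma det_tridiag_add_two (d : ℕ → R) (n : ℕ) :
    (tridiag d (n + 2)).det = d (n + 1) * (tridiag d (n + 1)).det - (tridiag d n).det := by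
  have hminor : (tridiag d (n + 2)).submatrix (Fin.castSucc ∘ Fin.castSucc)
      ((Fin.last n).castSucc.succAbove ∘ Fin.castSucc) = tridiag d n := by
    ext i j
    simp [tridiag, Fin.succAbove, Fin.lt_def]
  -- the minor of the subdiagonal entry in the last row has `-1` as the only nonzero entry of
  -- its last column
  have hminor_last : ((tridiag d (n + 2)).submatrix (Fin.last (n + 1)).succAbove
      (Fin.last n).castSucc.succAbove).det = -(tridiag d n).det := by
    rw [det_succ_column _ (Fin.last n), Fin.sum_univ_castSucc,
      Finset.sum_eq_zero fun i _ => by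
        rw [submatrix_apply, tridiag_apply_of_far d (by simp), mul_zero, zero_mul]]
    simp only [Fin.succAbove_last, submatrix_submatrix, hminor, submatrix_apply]
    rw [tridiag_apply_of_adj d (by simp)]
    simp
  rw [det_succ_row _ (Fin.last (n + 1)), Fin.sum_univ_castSucc, Fin.sum_univ_castSucc,
    Finset.sum_eq_zero fun i _ => by
      rw [tridiag_apply_of_far d (by simp), mul_zero, zero_mul], hminor_last, Fin.succAbove_last,
    tridiag_submatrix_castSucc, tridiag_apply_of_adj d (by simp), tridiag_apply_self]
  simp only [Fin.val_last, Fin.val_castSucc, odd_add_one_self, Odd.neg_one_pow, Even.add_self,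
    Even.neg_pow, one_pow]
  ring

end Tridiagonal

lemma chebU_add_two (n : ℕ) (y : ℂ) : chebU (n + 2) y = 2 * y * chebU (n + 1) y - chebU n y :=
  rfl

lemma det_tridiag_eq_chebU {d : ℕ → ℂ} {y α : ℂ} (h0 : d 0 = 2 * y + α) :
    ∀ n, (∀ k, 0 < k → k ≤ n → d k = 2 * y) →
      (tridiag d (n + 1)).det = chebU (n + 1) y + α * chebU n y
  | 0, _ => by simp [tridiag, h0, chebU]
  | 1, hmid => by
    rw [det_tridiag_add_two, det_tridiag_eq_chebU h0 0 (by omega), hmid 1 one_pos le_rfl,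
      det_isEmpty, chebU_add_two]
    simp only [chebU]
    ring
  | n + 2, hmid => by
    rw [det_tridiag_add_two, det_tridiag_eq_chebU h0 (n + 1) fun k hk _ => hmid k hk (by omega),
      det_tridiag_eq_chebU h0 n fun k hk _ => hmid k hk (by omega),
      hmid (n + 2) (by omega) le_rfl, chebU_add_two (n + 1), chebU_add_two n]
    ring

lemma det_tridiag_eq_chebU_of_corners {d : ℕ → ℂ} {y α β : ℂ} {n : ℕ} (h0 : d 0 = 2 * y + α)
    (hlast : d (n + 1) = 2 * y + β) (hmid : ∀ k, 0 < k → k ≤ n → d k = 2 * y) :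
    (tridiag d (n + 2)).det
      = chebU (n + 2) y + (α + β) * chebU (n + 1) y + α * β * chebU n y := by
  rw [det_tridiag_add_two, hlast, det_tridiag_eq_chebU h0 n hmid, chebU_add_two]
  cases n with
  | zero =>
    simp only [chebU, det_fin_zero]
    ring
  | succ n =>
    rw [det_tridiag_eq_chebU h0 n fun k hk _ => hmid k hk (by omega), chebU_add_two]
    ring

lemma Hmat_sub_smul_one_eq_tridiag (N : ℕ) (ω : ℝ) (lam : ℂ) :
    Hmat N ω - lam • (1 : Matrix (Fin N) (Fin N) ℂ) = tridiag (fun k =>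
      if k = 0 then -1 - Complex.I * ω - lam
      else if k = N - 1 then -1 + Complex.I * ω - lam else -lam) N := by
  ext j k
  simp only [Hmat, tridiag, Matrix.sub_apply, Matrix.smul_apply, one_apply, of_apply, smul_eq_mul,
    Fin.ext_iff]
  split_ifs <;> ring

/-- `det(H^{(N)}(ω) − λI) = P_{N,1+iω}(−λ/2)`; in particular `λ` is an eigenvalue of
`H^{(N)}(ω)` iff `−λ/2` is a root of `P_{N,1+iω}`. -/
theorem stmt12 (N : ℕ) (hN : 2 ≤ N) (ω : ℝ) (lam : ℂ) :
    (Hmat N ω - lam • (1 : Matrix (Fin N) (Fin N) ℂ)).det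
        = Psec N (1 + Complex.I * ω) (-lam / 2) ∧
    ((∃ v : Fin N → ℂ, v ≠ 0 ∧ Hmat N ω *ᵥ v = lam • v) ↔
        Psec N (1 + Complex.I * ω) (-lam / 2) = 0) := by
  obtain ⟨n, rfl⟩ : ∃ n, N = n + 2 := ⟨N - 2, by omega⟩
  have hdet : (Hmat (n + 2) ω - lam • (1 : Matrix (Fin (n + 2)) (Fin (n + 2)) ℂ)).det
      = Psec (n + 2) (1 + Complex.I * ω) (-lam / 2) := by
    rw [Hmat_sub_smul_one_eq_tridiag, det_tridiag_eq_chebU_of_corners (y := -lam / 2)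
      (α := -(1 + Complex.I * ω)) (β := -(1 - Complex.I * ω)) (by rw [if_pos rfl]; ring)
      (by rw [if_neg (by omega), if_pos (by omega)]; ring)
      fun k hk hkn => by rw [if_neg hk.ne', if_neg (by omega)]; ring]
    simp only [Psec, map_add, map_one, map_mul, Complex.conj_I, Complex.conj_ofReal,
      Nat.add_sub_cancel, Nat.add_one_sub_one]
    ring
  refine ⟨hdet, ?_⟩
  rw [← hdet, ← exists_mulVec_eq_zero_iff]
  simp only [sub_mulVec, smul_mulVec, one_mulVec, sub_eq_zero]
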